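/- Let p ∈ ℕ, w, w_α ∈ ℝ^p, and σ_1², …, σ_p² > 0. Over all diagonal Gaussian priors P = ⊗_{i=1}^p N(w_{α,i}, s_i²) with s_i² > 0, the minimum of KL(⊗_{i=1}^p N(w_i, σ_i²) ‖ P) equals (1/2)·Σ_{i=1}^p log(1 + (w_i − w_{α,i})²/σ_i²), and it is attained at s_i² = σ_i² + (w_i − w_{α,i})² for each i. -/

import Mathlib

open MeasureTheory ProbabilityTheory Set
open scoped ENNReal NNReal

noncomputable def klReal {H : Type*} [MeasurableSpace H] (Q P : Measure H) : ℝ :=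
  ∫ h, llr Q P h ∂Q

/-!
Both product measures have product densities with respect to Lebesgue measure, so their
log-likelihood ratio is a sum of one-dimensional Gaussian log-density ratios, and the KL
divergence splits as the sum over `i` of `(log sᵢ - log σᵢ + (σᵢ + dᵢ²) / sᵢ - 1) / 2`,
`dᵢ = wᵢ - w_{α,i}`, which only involves the first two moments of `N(wᵢ, σᵢ)`. Each term is
minimised separately: for `a = σᵢ + dᵢ²`, the inequality `log (a / s) ≤ a / s - 1` bounds it
below by `log (a / σᵢ) / 2`, with equality at `s = a`.
-/

open Real

namespace MeasureTheory

lemma lintegral_fin_nat_prod_eq_prod {n : ℕ} {X : Type*}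
    [MeasurableSpace X] (μ : Fin n → Measure X) [∀ i, SigmaFinite (μ i)]
    {f : Fin n → X → ℝ≥0∞} (hf : ∀ i, Measurable (f i)) :
    ∫⁻ x, ∏ i, f i (x i) ∂Measure.pi μ = ∏ i, ∫⁻ y, f i y ∂μ i := by
  induction n with
  | zero => simp
  | succ n ih =>
    calc ∫⁻ x, ∏ i, f i (x i) ∂Measure.pi μ
        = ∫⁻ x : X × (Fin n → X), f 0 x.1 * ∏ i : Fin n, f i.succ (x.2 i)
            ∂(μ 0).prod (Measure.pi fun i => μ i.succ) := by
          rw [← (measurePreserving_piFinSuccAbove μ 0).symm.lintegral_comp_emb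
            (MeasurableEquiv.measurableEmbedding _)]
          simp_rw [MeasurableEquiv.piFinSuccAbove_symm_apply, Fin.insertNthEquiv,
            Fin.prod_univ_succ, Fin.insertNth_zero, Equiv.coe_fn_mk, Fin.cons_succ,
            Fin.zero_succAbove, cast_eq, Fin.cons_zero]
      _ = ∏ i, ∫⁻ y, f i y ∂μ i := by
          rw [lintegral_prod_mul (g := fun y : Fin n → X => ∏ i, f i.succ (y i))
              (hf 0).aemeasurable (Finset.measurable_prod _ fun i _ =>
                (hf i.succ).comp (measurable_pi_apply i)).aemeasurable,
            ih _ fun i => hf i.succ, Fin.prod_univ_succ]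

lemma Measure.pi_withDensity {n : ℕ} {X : Type*}
    [MeasurableSpace X] (μ : Fin n → Measure X) [∀ i, SigmaFinite (μ i)]
    {f : Fin n → X → ℝ≥0∞} (hf : ∀ i, Measurable (f i))
    (hf_top : ∀ i, ∀ᵐ x ∂μ i, f i x ≠ ∞) :
    Measure.pi (fun i => (μ i).withDensity (f i))
      = (Measure.pi μ).withDensity fun x => ∏ i, f i (x i) := by
  have (i : Fin n) : SigmaFinite ((μ i).withDensity (f i)) :=
    SigmaFinite.withDensity_of_ne_top (hf_top i)
  refine Measure.pi_eq (μ := fun i => (μ i).withDensity (f i)) fun s hs => ?_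
  rw [withDensity_apply _ (MeasurableSet.univ_pi hs), Measure.restrict_pi_pi,
    lintegral_fin_nat_prod_eq_prod _ hf]
  exact Finset.prod_congr rfl fun i _ => (withDensity_apply _ (hs i)).symm

lemma llr_withDensity_withDensity {α : Type*} [MeasurableSpace α] {ν : Measure α}
    [SigmaFinite ν] {f g : α → ℝ≥0∞} (hf : Measurable f) (hg : Measurable g)
    (hf_top : ∀ᵐ x ∂ν, f x ≠ ∞) (hg_zero : ∀ᵐ x ∂ν, g x ≠ 0) (hg_top : ∀ᵐ x ∂ν, g x ≠ ∞) :
    llr (ν.withDensity f) (ν.withDensity g)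
      =ᵐ[ν.withDensity f] fun x => log (f x).toReal - log (g x).toReal := by
  have : SigmaFinite (ν.withDensity f) := SigmaFinite.withDensity_of_ne_top hf_top
  have h_rnDeriv :
      (ν.withDensity f).rnDeriv (ν.withDensity g) =ᵐ[ν] fun x => (g x)⁻¹ * f x := by
    filter_upwards [Measure.rnDeriv_withDensity_right (ν.withDensity f) ν hg.aemeasurable
      hg_zero hg_top, Measure.rnDeriv_withDensity ν hf] with x hx hfx
    rw [hx, hfx]
  have h_pos : ∀ᵐ x ∂ν.withDensity f, f x ≠ 0 :=
    (ae_withDensity_iff hf).mpr (ae_of_all _ fun _ => id)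
  filter_upwards [(withDensity_absolutelyContinuous ν f).ae_le h_rnDeriv, h_pos,
    (withDensity_absolutelyContinuous ν f).ae_le hf_top,
    (withDensity_absolutelyContinuous ν f).ae_le hg_zero,
    (withDensity_absolutelyContinuous ν f).ae_le hg_top] with x hx hf0 hft hg0 hgt
  rw [llr, hx, ENNReal.toReal_mul, ENNReal.toReal_inv, log_mul, log_inv]
  · ring
  · simp [ENNReal.toReal_eq_zero_iff, hg0, hgt]
  · simp [ENNReal.toReal_eq_zero_iff, hf0, hft]

end MeasureTheory

-- `KL(N(m₁, v₁) ‖ N(m₂, v₂))`, with `v₁, v₂` the variances.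
noncomputable def gaussianKL (m₁ v₁ m₂ v₂ : ℝ) : ℝ :=
  (log v₂ - log v₁ + (v₁ + (m₁ - m₂) ^ 2) / v₂ - 1) / 2

lemma gaussianKL_add_sq {m₁ m₂ v₁ : ℝ} (hv₁ : 0 < v₁) :
    gaussianKL m₁ v₁ m₂ (v₁ + (m₁ - m₂) ^ 2) = 1 / 2 * log (1 + (m₁ - m₂) ^ 2 / v₁) := by
  have hv₂ : 0 < v₁ + (m₁ - m₂) ^ 2 := by positivity
  rw [gaussianKL, div_self hv₂.ne', one_add_div hv₁.ne', log_div hv₂.ne' hv₁.ne']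
  ring

lemma half_log_one_add_sq_div_le_gaussianKL {m₁ m₂ v₁ v₂ : ℝ} (hv₁ : 0 < v₁) (hv₂ : 0 < v₂) :
    1 / 2 * log (1 + (m₁ - m₂) ^ 2 / v₁) ≤ gaussianKL m₁ v₁ m₂ v₂ := by
  have ha : 0 < v₁ + (m₁ - m₂) ^ 2 := by positivity
  have h := log_le_sub_one_of_pos (div_pos ha hv₂)
  rw [log_div ha.ne' hv₂.ne'] at h
  rw [gaussianKL, one_add_div hv₁.ne', log_div ha.ne' hv₁.ne']
  linarith

namespace ProbabilityTheory

variable {m m₁ m₂ : ℝ} {v v₁ v₂ : ℝ≥0}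

lemma integrable_id_gaussianReal : Integrable (fun y => y) (gaussianReal m v) :=
  (memLp_id_gaussianReal' 1 ENNReal.one_ne_top).integrable le_rfl

lemma memLp_sub_const_gaussianReal (c : ℝ) : MemLp (fun y => y - c) 2 (gaussianReal m v) :=
  (memLp_id_gaussianReal 2).sub (memLp_const c)

lemma integrable_sq_sub_gaussianReal (c : ℝ) :
    Integrable (fun y => (y - c) ^ 2) (gaussianReal m v) :=
  (memLp_sub_const_gaussianReal c).integrable_sq

lemma integral_sq_sub_gaussianReal (c : ℝ) :
    ∫ y, (y - c) ^ 2 ∂gaussianReal m v = v + (m - c) ^ 2 := by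
  have h := variance_eq_sub (memLp_sub_const_gaussianReal (m := m) (v := v) c)
  rw [variance_sub_const (X := fun y : ℝ => y) aestronglyMeasurable_id,
    variance_fun_id_gaussianReal,
    integral_sub integrable_id_gaussianReal (integrable_const c)] at h
  simp only [Pi.pow_apply, integral_id_gaussianReal, integral_const, probReal_univ, smul_eq_mul,
    one_mul] at h
  linarith

lemma log_gaussianPDFReal (hv : v ≠ 0) (y : ℝ) :
    log (gaussianPDFReal m v y) = -(log (2 * π) + log v) / 2 - (y - m) ^ 2 / (2 * v) := by
  have hv' : (0 : ℝ) < v := by positivity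
  rw [gaussianPDFReal, log_mul (by positivity) (exp_ne_zero _), log_inv, log_exp,
    log_sqrt (by positivity), log_mul (by positivity) hv'.ne']
  ring

lemma log_gaussianPDFReal_sub_log_gaussianPDFReal (hv₁ : v₁ ≠ 0) (hv₂ : v₂ ≠ 0) :
    (fun y => log (gaussianPDFReal m₁ v₁ y) - log (gaussianPDFReal m₂ v₂ y))
      = fun y => (log v₂ - log v₁) / 2
          + ((2 * v₂ : ℝ)⁻¹ * (y - m₂) ^ 2 - (2 * v₁ : ℝ)⁻¹ * (y - m₁) ^ 2) := by
  ext y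
  rw [log_gaussianPDFReal hv₁, log_gaussianPDFReal hv₂]
  ring

lemma integrable_log_gaussianPDFReal_sub (hv₁ : v₁ ≠ 0) (hv₂ : v₂ ≠ 0) :
    Integrable (fun y => log (gaussianPDFReal m₁ v₁ y) - log (gaussianPDFReal m₂ v₂ y))
      (gaussianReal m₁ v₁) := by
  rw [log_gaussianPDFReal_sub_log_gaussianPDFReal hv₁ hv₂]
  exact (integrable_const _).add
    (((integrable_sq_sub_gaussianReal m₂).const_mul _).sub
      ((integrable_sq_sub_gaussianReal m₁).const_mul _))

lemma integral_log_gaussianPDFReal_sub (hv₁ : v₁ ≠ 0) (hv₂ : v₂ ≠ 0) :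
    ∫ y, (log (gaussianPDFReal m₁ v₁ y) - log (gaussianPDFReal m₂ v₂ y)) ∂gaussianReal m₁ v₁
      = gaussianKL m₁ v₁ m₂ v₂ := by
  have hv₁' : (0 : ℝ) < v₁ := by positivity
  have hv₂' : (0 : ℝ) < v₂ := by positivity
  have h₂ := (integrable_sq_sub_gaussianReal (m := m₁) (v := v₁) m₂).const_mul (2 * v₂ : ℝ)⁻¹
  have h₁ := (integrable_sq_sub_gaussianReal (m := m₁) (v := v₁) m₁).const_mul (2 * v₁ : ℝ)⁻¹
  rw [log_gaussianPDFReal_sub_log_gaussianPDFReal hv₁ hv₂,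
    integral_add (integrable_const _) (by exact h₂.sub h₁), integral_sub h₂ h₁,
    integral_const_mul, integral_const_mul, integral_sq_sub_gaussianReal,
    integral_sq_sub_gaussianReal, integral_const, probReal_univ, one_smul, sub_self, gaussianKL]
  field_simp
  ring

lemma pi_gaussianReal_eq_withDensity {n : ℕ} {m : Fin n → ℝ} {v : Fin n → ℝ≥0}
    (hv : ∀ i, v i ≠ 0) :
    Measure.pi (fun i => gaussianReal (m i) (v i))
      = (Measure.pi fun _ => volume).withDensity fun x => ∏ i, gaussianPDF (m i) (v i) (x i) := by
  simp_rw [gaussianReal_of_var_ne_zero _ (hv _)]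
  exact Measure.pi_withDensity _ (fun i => measurable_gaussianPDF _ _)
    fun i => ae_of_all _ fun _ => gaussianPDF_ne_top

lemma llr_pi_gaussianReal {n : ℕ} {m₁ m₂ : Fin n → ℝ} {v₁ v₂ : Fin n → ℝ≥0}
    (hv₁ : ∀ i, v₁ i ≠ 0) (hv₂ : ∀ i, v₂ i ≠ 0) :
    llr (Measure.pi fun i => gaussianReal (m₁ i) (v₁ i))
        (Measure.pi fun i => gaussianReal (m₂ i) (v₂ i))
      =ᵐ[Measure.pi fun i => gaussianReal (m₁ i) (v₁ i)] fun x =>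
        ∑ i, (log (gaussianPDFReal (m₁ i) (v₁ i) (x i))
          - log (gaussianPDFReal (m₂ i) (v₂ i) (x i))) := by
  rw [pi_gaussianReal_eq_withDensity hv₁, pi_gaussianReal_eq_withDensity hv₂]
  have h_meas (m : Fin n → ℝ) (v : Fin n → ℝ≥0) :
      Measurable fun x : Fin n → ℝ => ∏ i, gaussianPDF (m i) (v i) (x i) :=
    Finset.measurable_prod _ fun i _ => (measurable_gaussianPDF _ _).comp (measurable_pi_apply i)
  filter_upwards [llr_withDensity_withDensity (h_meas m₁ v₁) (h_meas m₂ v₂)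
    (ae_of_all _ fun _ => ENNReal.prod_ne_top fun _ _ => gaussianPDF_ne_top)
    (ae_of_all _ fun _ => Finset.prod_ne_zero_iff.mpr fun i _ =>
      (gaussianPDF_pos _ (hv₂ i) _).ne')
    (ae_of_all _ fun _ => ENNReal.prod_ne_top fun _ _ => gaussianPDF_ne_top)] with x hx
  simp only [hx, ENNReal.toReal_prod, toReal_gaussianPDF]
  rw [log_prod fun i _ => (gaussianPDFReal_pos _ _ _ (hv₁ i)).ne',
    log_prod fun i _ => (gaussianPDFReal_pos _ _ _ (hv₂ i)).ne', Finset.sum_sub_distrib]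

lemma klReal_pi_gaussianReal {n : ℕ} {m₁ m₂ : Fin n → ℝ} {v₁ v₂ : Fin n → ℝ≥0}
    (hv₁ : ∀ i, v₁ i ≠ 0) (hv₂ : ∀ i, v₂ i ≠ 0) :
    klReal (Measure.pi fun i => gaussianReal (m₁ i) (v₁ i))
        (Measure.pi fun i => gaussianReal (m₂ i) (v₂ i))
      = ∑ i, gaussianKL (m₁ i) (v₁ i) (m₂ i) (v₂ i) := by
  have h_int (i : Fin n) :=
    integrable_log_gaussianPDFReal_sub (m₁ := m₁ i) (m₂ := m₂ i) (hv₁ i) (hv₂ i)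
  rw [klReal, integral_congr_ae (llr_pi_gaussianReal hv₁ hv₂), integral_finsetSum _ fun i _ =>
    integrable_comp_eval (μ := fun i => gaussianReal (m₁ i) (v₁ i)) (h_int i)]
  refine Finset.sum_congr rfl fun i _ => ?_
  exact (integral_comp_eval (μ := fun i => gaussianReal (m₁ i) (v₁ i))
    (h_int i).aestronglyMeasurable).trans (integral_log_gaussianPDFReal_sub (hv₁ i) (hv₂ i))

end ProbabilityTheory

theorem optimal_diagonal_gaussian_prior_variance
    (p : ℕ) (w wα : Fin p → ℝ) (σ : Fin p → ℝ≥0) (hσ : ∀ i, σ i ≠ 0) :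
    IsLeast
      {k : ℝ | ∃ s : Fin p → ℝ≥0, (∀ i, s i ≠ 0) ∧
        k = klReal (Measure.pi fun i => gaussianReal (w i) (σ i))
              (Measure.pi fun i => gaussianReal (wα i) (s i))}
      ((1 / 2) * ∑ i, Real.log (1 + (w i - wα i) ^ 2 / (σ i : ℝ))) ∧
    klReal (Measure.pi fun i => gaussianReal (w i) (σ i))
        (Measure.pi fun i => gaussianReal (wα i)
          (σ i + Real.toNNReal ((w i - wα i) ^ 2))) =
      (1 / 2) * ∑ i, Real.log (1 + (w i - wα i) ^ 2 / (σ i : ℝ)) := by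
  have hσ_pos (i : Fin p) : (0 : ℝ) < σ i := by have := hσ i; positivity
  have hs_opt (i : Fin p) : σ i + ((w i - wα i) ^ 2).toNNReal ≠ 0 :=
    fun h => hσ i (add_eq_zero.mp h).1
  have h_opt : klReal (Measure.pi fun i => gaussianReal (w i) (σ i))
      (Measure.pi fun i => gaussianReal (wα i) (σ i + ((w i - wα i) ^ 2).toNNReal))
      = 1 / 2 * ∑ i, log (1 + (w i - wα i) ^ 2 / (σ i : ℝ)) := by
    rw [klReal_pi_gaussianReal hσ hs_opt, Finset.mul_sum]
    refine Finset.sum_congr rfl fun i _ => ?_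
    rw [NNReal.coe_add, coe_toNNReal _ (sq_nonneg _), gaussianKL_add_sq (hσ_pos i)]
  refine ⟨⟨⟨_, hs_opt, h_opt.symm⟩, ?_⟩, h_opt⟩
  rintro _ ⟨s, hs, rfl⟩
  rw [klReal_pi_gaussianReal hσ hs, Finset.mul_sum]
  exact Finset.sum_le_sum fun i _ =>
    half_log_one_add_sq_div_le_gaussianKL (hσ_pos i) (by have := hs i; positivity)
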